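/- In a regular execution with no color changes, any process u that executes rules infinitely often has, forever, some child that also executes rules infinitely often; hence there exists a cycle path u_1,...,u_l (P.u_i = u_{i-1} for 1 < i ≤ l and P.u_1 = u_l) all of whose processes execute infinitely often. -/

import Mathlib

namespace BFS

inductive Status : Type
  | Idle | Working | Power | WeakE | StrongE
deriving DecidableEq

open Status

inductive Rule (V : Type) : Type
  | RC1 | RC2 | RC3 | RC4 | RC5 | RC6
  | R1 | R2
  | R3 (v : V)
  | R4 | R5 | R6 | R7
deriving DecidableEq

structure ProcState (V : Type) where
  P : Option V
  TS : Option V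
  C : Bool
  S : Status
  ph : Bool

abbrev Config (V : Type) := V → ProcState V

variable {V : Type} [Fintype V] [DecidableEq V]

/-- Erroneous statuses. -/
def Erroneous (s : Status) : Prop := s = WeakE ∨ s = StrongE

/-- The children of `u`: neighbors whose parent pointer designates `u`. -/
def Child (G : SimpleGraph V) (c : Config V) (u : V) : Set V :=
  {v | G.Adj u v ∧ (c v).P = some u}

/-- Closed neighborhood `N[u]`. -/
def ClosedNbr (G : SimpleGraph V) (u : V) : Set V := insert u (G.neighborSet u)

def StrongConflict (G : SimpleGraph V) (c : Config V) (u : V) : Prop :=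
  (c u).S ≠ StrongE ∧
    ∃ w ∈ ClosedNbr G u, ∃ v ∈ ClosedNbr G u,
      (c v).C ≠ (c u).C ∧ (c w).S = Power ∧ (c v).S = Power

def Conflict (G : SimpleGraph V) (r : V) (c : Config V) (u : V) : Prop :=
  (u ≠ r ∧ (c u).P ≠ none ∧
      ∃ v ∈ G.neighborSet u, (c v).S = Power ∧ (c v).C ≠ (c u).C) ∨
  (u = r ∧ (c u).S ≠ StrongE ∧
      ∃ v ∈ G.neighborSet u, (c v).S = Power ∧
        ((c v).C ≠ (c u).C ∨ Child G c u = ∅))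

def Detached (G : SimpleGraph V) (r : V) (c : Config V) (u : V) : Prop :=
  Child G c u = ∅ ∧ ((c u).P = none ∨ u = r) ∧ (c u).S ≠ Power

def StrongEReady (G : SimpleGraph V) (c : Config V) (u : V) : Prop :=
  (c u).S = StrongE ∧ ∀ v ∈ G.neighborSet u, (c v).S ≠ Power

def PowerFaulty (G : SimpleGraph V) (c : Config V) (u : V) : Prop :=
  (c u).S = Power ∧ ∃ v ∈ G.neighborSet u, (c v).S = StrongE

def Faulty (G : SimpleGraph V) (r : V) (c : Config V) (u : V) : Prop :=
  u ≠ r ∧ ∃ p, (c u).P = some p ∧ ¬ Erroneous (c p).S ∧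
    (Erroneous (c u).S ∨
     (c u).C ≠ (c p).C ∨
     ((c p).S ≠ Working ∧ (c u).S ≠ Idle) ∨
     ((c p).S = (c u).S ∧ (c u).ph ≠ (c p).ph) ∨
     ((c u).S = Power ∧ (c u).ph ≠ (c p).ph) ∨
     ((c p).S = Power ∧ (Child G c u ≠ ∅ ∨ (c u).ph ≠ (c p).ph)))

def IllegalRoot (G : SimpleGraph V) (r : V) (c : Config V) (u : V) : Prop :=
  u ≠ r ∧ (c u).P = none ∧ ¬ Detached G r c u

def IllegalLiveRoot (G : SimpleGraph V) (r : V) (c : Config V) (u : V) : Prop :=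
  IllegalRoot G r c u ∧ ¬ Erroneous (c u).S

def IllegalChild (r : V) (c : Config V) (u : V) : Prop :=
  u ≠ r ∧ ∃ p, (c u).P = some p ∧ Erroneous (c p).S

def Isolated (G : SimpleGraph V) (c : Config V) (u : V) : Prop :=
  (c u).S = WeakE ∨ (c u).S = Working ∨ StrongEReady G c u

def Ok (G : SimpleGraph V) (r : V) (c : Config V) (u : V) : Prop :=
  ¬ StrongConflict G c u ∧ ¬ Conflict G r c u ∧ ¬ PowerFaulty G c u ∧
  ¬ Faulty G r c u ∧ ¬ IllegalRoot G r c u ∧ ¬ IllegalChild r c u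

def QuietSubTree (G : SimpleGraph V) (c : Config V) (u : V) : Prop :=
  ∀ v ∈ Child G c u, (c v).S = Idle ∧ (c v).ph = (c u).ph

def EndFirstPhase (G : SimpleGraph V) (c : Config V) (u : V) : Prop :=
  (c u).S = Power ∧ QuietSubTree G c u ∧ ∀ v ∈ G.neighborSet u, (c v).C = (c u).C

def EndPhase (G : SimpleGraph V) (c : Config V) (u : V) : Prop :=
  (c u).S = Working ∧ QuietSubTree G c u

def EndLastPhase (G : SimpleGraph V) (c : Config V) (u : V) : Prop :=
  Child G c u = ∅ ∧ (EndFirstPhase G c u ∨ EndPhase G c u)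

def EndIntermediatePhase (G : SimpleGraph V) (c : Config V) (u : V) : Prop :=
  Child G c u ≠ ∅ ∧ (EndFirstPhase G c u ∨ EndPhase G c u)

def Connection (G : SimpleGraph V) (r : V) (c : Config V) (u v : V) : Prop :=
  Detached G r c u ∧ (Isolated G c u ∨ (c u).S = Idle) ∧
  G.Adj u v ∧ (c v).C ≠ (c u).C ∧ (c v).S = Power

def NewPhase (G : SimpleGraph V) (c : Config V) (u : V) : Prop :=
  ∃ p, (c u).P = some p ∧ QuietSubTree G c u ∧ (c u).S = Idle ∧ (c u).ph ≠ (c p).ph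

/-- Guards of the rules RC1–RC6, R1–R7 of the algorithm. -/
def Guard (G : SimpleGraph V) (r : V) : Rule V → Config V → V → Prop
  | .RC1, c, u => u = r ∧ ¬ Conflict G r c u ∧ PowerFaulty G c u ∧ QuietSubTree G c u
  | .RC2, c, u => u = r ∧ Detached G r c u ∧ StrongEReady G c u
  | .RC3, c, u => u = r ∧ Conflict G r c u
  | .RC4, c, u => u ≠ r ∧ StrongConflict G c u
  | .RC5, c, u => u ≠ r ∧ ¬ StrongConflict G c u ∧
      (Conflict G r c u ∨ Faulty G r c u ∨ PowerFaulty G c u ∨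
       IllegalLiveRoot G r c u ∨ IllegalChild r c u)
  | .RC6, c, u => u ≠ r ∧ Detached G r c u ∧ Isolated G c u ∧
      ∀ v ∈ G.neighborSet u, (c v).C = (c u).C ∨ (c v).S ≠ Power
  | .R1, c, u => u = r ∧ Ok G r c u ∧ EndLastPhase G c u ∧
      ∀ v ∈ G.neighborSet u, (c v).S ≠ StrongE
  | .R2, c, u => u = r ∧ Ok G r c u ∧ EndIntermediatePhase G c u
  | .R3 v, c, u => u ≠ r ∧ Ok G r c u ∧ Connection G r c u v
  | .R4, c, u => u ≠ r ∧ Ok G r c u ∧ NewPhase G c u ∧ Child G c u ≠ ∅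
  | .R5, c, u => u ≠ r ∧ Ok G r c u ∧ NewPhase G c u ∧ Child G c u = ∅ ∧
      ∀ v ∈ G.neighborSet u, (c v).S ≠ StrongE
  | .R6, c, u => u ≠ r ∧ Ok G r c u ∧ EndIntermediatePhase G c u
  | .R7, c, u => u ≠ r ∧ Ok G r c u ∧ (c u).P ≠ none ∧ EndLastPhase G c u

/-- Phase of the parent of `u` (or `u`'s own phase if it has no parent). -/
def parentPh (c : Config V) (u : V) : Bool :=
  match (c u).P with
  | some p => (c p).ph
  | none => (c u).ph

/-- The action of each rule: the new local state of the executing process `u`. -/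
def execRule (c : Config V) (u : V) : Rule V → ProcState V
  | .RC1 => { c u with S := Working }
  | .RC2 => { c u with S := Working }
  | .RC3 => { c u with S := StrongE }
  | .RC4 => { c u with S := StrongE, P := none }
  | .RC5 => { c u with S := WeakE, P := none }
  | .RC6 => { c u with S := Idle }
  | .R1 => { c u with C := !(c u).C, S := Power }
  | .R2 => { c u with ph := !(c u).ph, S := Working }
  | .R3 v => { c u with C := (c v).C, ph := (c v).ph, S := Idle, P := some v, TS := some v }
  | .R4 => { c u with ph := parentPh c u, S := Working }
  | .R5 => { c u with ph := parentPh c u, S := Power }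
  | .R6 => { c u with S := Idle }
  | .R7 => { c u with S := Idle, P := none }

/-- A computation step: a nonempty set of enabled processes each atomically
executes one enabled rule; all other processes keep their state. -/
def IsStep (G : SimpleGraph V) (r : V) (c1 : Config V)
    (act : V → Option (Rule V)) (c2 : Config V) : Prop :=
  (∃ u ρ, act u = some ρ) ∧
  ∀ u, (act u = none → c2 u = c1 u) ∧
       ∀ ρ, act u = some ρ → Guard G r ρ c1 u ∧ c2 u = execRule c1 u ρ

def Step (G : SimpleGraph V) (r : V) (c1 c2 : Config V) : Prop :=
  ∃ act, IsStep G r c1 act c2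

/-- A process is enabled if the guard of some rule holds at it. -/
def Enabled (G : SimpleGraph V) (r : V) (c : Config V) (u : V) : Prop :=
  ∃ ρ : Rule V, Guard G r ρ c u

/-- Well-formed configurations: pointers designate neighbors, and the root has
no parent and only uses the statuses Power, Working, StrongE. -/
def WellFormed (G : SimpleGraph V) (r : V) (c : Config V) : Prop :=
  (∀ u v, (c u).P = some v → G.Adj u v) ∧
  (∀ u v, (c u).TS = some v → G.Adj u v) ∧
  (c r).P = none ∧ (c r).TS = none ∧
  ((c r).S = Power ∨ (c r).S = Working ∨ (c r).S = StrongE)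

/-- `PowerParent u`: some descendant of `u` (possibly `u`) may take the `Power`
status by a series of R4/R5 moves. -/
inductive PowerParent (c : Config V) : V → Prop
  | base (u p : V) : (c u).P = some p → (c u).S = Idle → (c p).S = Working →
      (c u).ph ≠ (c p).ph → PowerParent c u
  | step (u p : V) : (c u).P = some p → PowerParent c p → (c u).S = Idle →
      (c u).ph = (c p).ph → PowerParent c u

def Influential (c : Config V) (u : V) : Prop :=
  (c u).S = Power ∨ PowerParent c u

/-- `u` lies on a branch rooted at `r` all of whose members are non-faulty,
and the root is not StrongE. -/
inductive InLegalTree (G : SimpleGraph V) (r : V) (c : Config V) : V → Prop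
  | root : (c r).S ≠ StrongE → InLegalTree G r c r
  | child (u p : V) : (c u).P = some p → InLegalTree G r c p →
      ¬ Faulty G r c u → InLegalTree G r c u

def InsideLegalTree (G : SimpleGraph V) (r : V) (c : Config V) (u : V) : Prop :=
  InLegalTree G r c u ∧ (c u).S ≠ Power ∧ Child G c u ≠ ∅

def UnSafe (G : SimpleGraph V) (r : V) (c : Config V) (u : V) : Prop :=
  InsideLegalTree G r c u ∧
    ∃ v ∈ G.neighborSet u, (c v).C ≠ (c u).C ∧ Influential c v

def UnRegular (G : SimpleGraph V) (r : V) (c : Config V) (u : V) : Prop :=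
  ¬ Detached G r c u ∧ ¬ InLegalTree G r c u

/-- Infinite executions of the algorithm (by Theorem `no deadlock` there is no
terminal configuration). -/
structure Execution (G : SimpleGraph V) (r : V) where
  conf : ℕ → Config V
  act : ℕ → V → Option (Rule V)
  valid : ∀ i, IsStep G r (conf i) (act i) (conf (i + 1))

/-- The suffix of an execution starting at time `k`. -/
def Execution.shift {G : SimpleGraph V} {r : V} (e : Execution G r) (k : ℕ) :
    Execution G r where
  conf := fun i => e.conf (k + i)
  act := fun i => e.act (k + i)
  valid := fun i => e.valid (k + i)

/-- The first round of `e` is completed by time `t`: every process enabled in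
the initial configuration has executed a rule or been neutralized before `t`. -/
def CompletesRound (G : SimpleGraph V) (r : V) (e : Execution G r) (t : ℕ) : Prop :=
  ∀ u, Enabled G r (e.conf 0) u →
    ∃ j, j < t ∧ (e.act j u ≠ none ∨ ¬ Enabled G r (e.conf (j + 1)) u)

/-- `RoundsElapsed G r e k t`: at least `k` rounds of `e` are completed by time `t`. -/
def RoundsElapsed (G : SimpleGraph V) (r : V) (e : Execution G r) : ℕ → ℕ → Prop
  | 0, t => t = 0
  | k + 1, t => ∃ s, s ≤ t ∧ RoundsElapsed G r e k s ∧
      CompletesRound G r (e.shift s) (t - s)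

/-- The tree-construction rules R1–R7. -/
def TreeRule : Rule V → Prop := fun ρ =>
  ρ = Rule.R1 ∨ ρ = Rule.R2 ∨ (∃ v, ρ = Rule.R3 v) ∨ ρ = Rule.R4 ∨
  ρ = Rule.R5 ∨ ρ = Rule.R6 ∨ ρ = Rule.R7

noncomputable def FaultyCount (G : SimpleGraph V) (r : V) (c : Config V) : ℕ :=
  {u | Faulty G r c u}.ncard

/-- Inside-safe executions: insideLegalTree processes execute only R1–R7 and
the number of Faulty processes stays constant. -/
def InsideSafeExec (G : SimpleGraph V) (r : V) (e : Execution G r) : Prop :=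
  (∀ i u ρ, InsideLegalTree G r (e.conf i) u → e.act i u = some ρ → TreeRule ρ) ∧
  (∀ i, FaultyCount G r (e.conf i) = FaultyCount G r (e.conf 0))

/-- Safe executions. -/
def SafeExec (G : SimpleGraph V) (r : V) (e : Execution G r) : Prop :=
  (∀ i u ρ, InsideLegalTree G r (e.conf i) u → e.act i u = some ρ → TreeRule ρ) ∧
  (∀ i u, Influential (e.conf i) u → UnRegular G r (e.conf i) u → e.act i u = none) ∧
  (∀ i u, ¬ PowerFaulty G (e.conf i) u → ¬ PowerFaulty G (e.conf (i + 1)) u) ∧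
  (∀ i u, e.act i u ≠ some Rule.RC1 ∧ e.act i u ≠ some Rule.RC4 ∧
      e.act i u ≠ some Rule.RC3 ∧ e.act i u ≠ some Rule.RC2)

/-- Pseudo-regular executions. -/
def PseudoRegularExec (G : SimpleGraph V) (r : V) (e : Execution G r) : Prop :=
  SafeExec G r e ∧
  (∀ i u ρ, InLegalTree G r (e.conf i) u → e.act i u = some ρ → TreeRule ρ) ∧
  (∀ i u, ¬ UnRegular G r (e.conf i) u → ¬ UnRegular G r (e.conf (i + 1)) u)

/-- Regular executions: pseudo-regular and all processes execute only R1–R7. -/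
def RegularExec (G : SimpleGraph V) (r : V) (e : Execution G r) : Prop :=
  PseudoRegularExec G r e ∧ (∀ i u ρ, e.act i u = some ρ → TreeRule ρ)

/-- `u` executes rules infinitely often along `e`. -/
def ActsInfOften {G : SimpleGraph V} {r : V} (e : Execution G r) (u : V) : Prop :=
  ∀ k, ∃ i, k ≤ i ∧ e.act i u ≠ none

def A1 (G : SimpleGraph V) (r : V) (c : Config V) : Prop :=
  ∀ u, ¬ Faulty G r c u ∧ ¬ IllegalLiveRoot G r c u

def A2 (G : SimpleGraph V) (r : V) (c : Config V) : Prop :=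
  A1 G r c ∧ ∀ u, ¬ UnSafe G r c u

def A3 (G : SimpleGraph V) (r : V) (c : Config V) : Prop :=
  A2 G r c ∧ ∀ u, ¬ Influential c u ∨ InLegalTree G r c u

def A4 (G : SimpleGraph V) (r : V) (c : Config V) : Prop :=
  A3 G r c ∧ ∀ u, (c u).S ≠ StrongE

def PIC (r : V) (c : Config V) (u : V) : Prop :=
  Influential c u ∧ (c u).C ≠ (c r).C

def PICPowerParent (r : V) (c : Config V) (u : V) : Prop :=
  PIC r c u ∧ PowerParent c u

end BFS

/-!
Without recoloring, neither R1 nor R3 can be executed, so parent pointers are never created and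
only R7 erases them; a non-root process that executes R7 becomes an idle orphan and never moves
again. A process `u` that acts infinitely often therefore alternates forever between moves that
change its phase (R2, or R4/R5) and moves that require a nonempty quiet set of children (R2, or
R6). Since `u` never gains children, its set of children stabilizes to a nonempty set of
permanent children. Each of them has `u`'s phase at every quiet moment of `u`, and `u`'s phase
keeps changing, so each permanent child acts infinitely often as well. Following permanent
children inside the finite set of processes acting infinitely often must close a cycle.
-/

theorem exists_periodic_chain {α : Type*} [Finite α] [Nonempty α] {R : α → α → Prop}
    (h : ∀ a, ∃ b, R a b) :
    ∃ l, 0 < l ∧ ∃ us : ℕ → α, (∀ j, us (j + l) = us j) ∧ ∀ j, R (us j) (us (j + 1)) := by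
  choose f hf using h
  obtain ⟨m, n, hmn, hfmn⟩ := Set.finite_univ.exists_lt_map_eq_of_forall_mem
    (f := fun n => f^[n] (Classical.arbitrary α)) fun _ => Set.mem_univ _
  refine ⟨n - m, by omega, fun j => f^[j + m] (Classical.arbitrary α), fun j => ?_, fun j => ?_⟩
  · simp only [Function.iterate_add_apply, ← Function.iterate_add_apply f (n - m) m,
      Nat.sub_add_cancel hmn.le, ← hfmn]
  · simpa only [Nat.add_right_comm j 1 m, Function.iterate_succ_apply'] using hf _

namespace BFS

open Status

variable {V : Type} {G : SimpleGraph V} {r : V}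

namespace Execution

variable (e : Execution G r) {u : V} {ρ : Rule V} {i j : ℕ}

theorem conf_succ_of_act_eq_none (h : e.act i u = none) : e.conf (i + 1) u = e.conf i u :=
  ((e.valid i).2 u).1 h

theorem guard_of_act_eq_some (h : e.act i u = some ρ) : Guard G r ρ (e.conf i) u :=
  (((e.valid i).2 u).2 ρ h).1

theorem conf_succ_of_act_eq_some (h : e.act i u = some ρ) :
    e.conf (i + 1) u = execRule (e.conf i) u ρ :=
  (((e.valid i).2 u).2 ρ h).2

theorem conf_eq_of_forall_act_eq_none (hij : i ≤ j)
    (h : ∀ t, i ≤ t → t < j → e.act t u = none) : e.conf j u = e.conf i u := by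
  induction j, hij using Nat.le_induction with
  | base => rfl
  | succ j hij ih =>
    rw [e.conf_succ_of_act_eq_none (h j hij j.lt_succ_self), ih fun t h₁ h₂ => h t h₁ (by omega)]

theorem exists_act_of_ph_ne (hij : i ≤ j) (h : (e.conf j u).ph ≠ (e.conf i u).ph) :
    ∃ t, i ≤ t ∧ t < j ∧ e.act t u ≠ none := by
  by_contra! hcon
  exact h (congrArg ProcState.ph (e.conf_eq_of_forall_act_eq_none hij hcon))

def TreeRulesNoRecolor : Prop :=
  (∀ i u ρ, e.act i u = some ρ → TreeRule ρ) ∧ ∀ i u, (e.conf (i + 1) u).C = (e.conf i u).C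

end Execution

section

variable {e : Execution G r} {u : V}

theorem ActsInfOften.exists_next_act (hu : ActsInfOften e u) (t : ℕ) :
    ∃ k, t < k ∧ e.act k u ≠ none ∧ e.conf k u = e.conf (t + 1) u := by
  classical
  have hex : ∃ k, t + 1 ≤ k ∧ e.act k u ≠ none := hu (t + 1)
  obtain ⟨hle, hact⟩ := Nat.find_spec hex
  refine ⟨Nat.find hex, hle, hact, e.conf_eq_of_forall_act_eq_none hle fun s hs hlt => ?_⟩
  by_contra h
  exact Nat.find_min hex hlt ⟨hs, h⟩

theorem exists_actsInfOften [Finite V] (e : Execution G r) : ∃ u, ActsInfOften e u := by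
  choose actor ρ hρ using fun i => (e.valid i).1
  obtain ⟨u, hu⟩ := Finite.exists_infinite_fiber actor
  refine ⟨u, fun k => ?_⟩
  obtain ⟨i, hi, hki⟩ := (Set.infinite_coe_iff.mp hu).exists_gt k
  refine ⟨i, hki.le, ?_⟩
  rw [← Set.mem_singleton_iff.mp hi, hρ i]
  exact Option.some_ne_none _

theorem EndIntermediatePhase.quietSubTree {c : Config V} (h : EndIntermediatePhase G c u) :
    QuietSubTree G c u := by
  rcases h.2 with h | h
  exacts [h.2.1, h.2]

theorem EndIntermediatePhase.status_ne_idle {c : Config V} (h : EndIntermediatePhase G c u) :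
    (c u).S ≠ Idle := by
  rcases h.2 with h | h <;> simp [h.1]

theorem NewPhase.status_eq_idle {c : Config V} (h : NewPhase G c u) : (c u).S = Idle :=
  h.choose_spec.2.2.1

theorem NewPhase.ph_ne_parentPh {c : Config V} (h : NewPhase G c u) :
    (c u).ph ≠ parentPh c u := by
  obtain ⟨p, hp, -, -, hph⟩ := h
  simpa [parentPh, hp] using hph

end

namespace Execution.TreeRulesNoRecolor

variable {e : Execution G r} {u v : V} {ρ : Rule V} {i j s t : ℕ}

theorem rule_cases (he : e.TreeRulesNoRecolor) (h : e.act i u = some ρ) :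
    ρ = .R2 ∨ ρ = .R4 ∨ ρ = .R5 ∨ ρ = .R6 ∨ ρ = .R7 := by
  have hC := he.2 i u
  rw [e.conf_succ_of_act_eq_some h] at hC
  rcases he.1 i u ρ h with rfl | rfl | ⟨w, rfl⟩ | rfl | rfl | rfl | rfl
  · simp [execRule] at hC
  · simp
  · exact absurd hC (e.guard_of_act_eq_some h).2.2.2.2.2.1
  all_goals simp

theorem parent_eq_of_succ (he : e.TreeRulesNoRecolor) (h : (e.conf (i + 1) v).P = some u) :
    (e.conf i v).P = some u := by
  cases hv : e.act i v with
  | none => rwa [e.conf_succ_of_act_eq_none hv] at h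
  | some ρ =>
    rw [e.conf_succ_of_act_eq_some hv] at h
    rcases he.rule_cases hv with rfl | rfl | rfl | rfl | rfl <;> simp [execRule] at h <;> exact h

theorem parent_eq_of_le (he : e.TreeRulesNoRecolor) (hij : i ≤ j)
    (h : (e.conf j v).P = some u) : (e.conf i v).P = some u := by
  induction j, hij using Nat.le_induction with
  | base => exact h
  | succ j _ ih => exact ih (he.parent_eq_of_succ h)

theorem child_antitone (he : e.TreeRulesNoRecolor) (u : V) :
    Antitone fun i => Child G (e.conf i) u :=
  fun _ _ hij _ hv => ⟨hv.1, he.parent_eq_of_le hij hv.2⟩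

theorem act_eq_none_of_orphan_idle (he : e.TreeRulesNoRecolor) (hvr : v ≠ r)
    (hP : (e.conf t v).P = none) (hS : (e.conf t v).S = Idle) : e.act t v = none := by
  cases hv : e.act t v with
  | none => rfl
  | some ρ =>
    have hg := e.guard_of_act_eq_some hv
    rcases he.rule_cases hv with rfl | rfl | rfl | rfl | rfl
    · exact absurd hg.1 hvr
    · obtain ⟨p, hp, -⟩ := hg.2.2.1
      simp [hP] at hp
    · obtain ⟨p, hp, -⟩ := hg.2.2.1
      simp [hP] at hp
    · exact absurd hS hg.2.2.status_ne_idle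
    · exact absurd hP hg.2.2.1

theorem conf_eq_of_orphan_idle (he : e.TreeRulesNoRecolor) (hvr : v ≠ r)
    (hP : (e.conf t v).P = none) (hS : (e.conf t v).S = Idle) (hts : t ≤ s) :
    e.conf s v = e.conf t v := by
  induction s, hts using Nat.le_induction with
  | base => rfl
  | succ s _ ih =>
    rw [e.conf_succ_of_act_eq_none (he.act_eq_none_of_orphan_idle hvr (ih ▸ hP) (ih ▸ hS)), ih]

theorem act_ne_R7 (he : e.TreeRulesNoRecolor) (hu : ActsInfOften e u) (t : ℕ) :
    e.act t u ≠ some .R7 := by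
  intro h
  have hur := (e.guard_of_act_eq_some h).1
  have hsucc := e.conf_succ_of_act_eq_some h
  have hP : (e.conf (t + 1) u).P = none := by simp [hsucc, execRule]
  have hS : (e.conf (t + 1) u).S = Idle := by simp [hsucc, execRule]
  obtain ⟨s, hs, hact⟩ := hu (t + 1)
  have hfrozen := he.conf_eq_of_orphan_idle hur hP hS hs
  exact hact (he.act_eq_none_of_orphan_idle hur (hfrozen ▸ hP) (hfrozen ▸ hS))

theorem root_step (he : e.TreeRulesNoRecolor) (ht : e.act t r ≠ none) :
    QuietSubTree G (e.conf t) r ∧ Child G (e.conf t) r ≠ ∅ ∧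
      (e.conf (t + 1) r).ph = !(e.conf t r).ph := by
  obtain ⟨ρ, hρ⟩ := Option.ne_none_iff_exists'.mp ht
  have hg := e.guard_of_act_eq_some hρ
  rcases he.rule_cases hρ with rfl | rfl | rfl | rfl | rfl
  · simp [hg.2.2.quietSubTree, hg.2.2.1, e.conf_succ_of_act_eq_some hρ, execRule]
  all_goals exact absurd rfl hg.1

-- R4/R5 open a new phase from the idle status and R6 closes it; R7 is excluded by `act_ne_R7`.
theorem ne_root_step (he : e.TreeRulesNoRecolor) (hu : ActsInfOften e u) (hur : u ≠ r)
    (ht : e.act t u ≠ none) :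
    ((e.conf t u).S = Idle ∧ (e.conf (t + 1) u).S ≠ Idle ∧
        (e.conf (t + 1) u).ph ≠ (e.conf t u).ph) ∨
      ((e.conf t u).S ≠ Idle ∧ QuietSubTree G (e.conf t) u ∧ Child G (e.conf t) u ≠ ∅ ∧
        (e.conf (t + 1) u).S = Idle ∧ (e.conf (t + 1) u).ph = (e.conf t u).ph) := by
  obtain ⟨ρ, hρ⟩ := Option.ne_none_iff_exists'.mp ht
  have hg := e.guard_of_act_eq_some hρ
  have hsucc := e.conf_succ_of_act_eq_some hρ
  rcases he.rule_cases hρ with rfl | rfl | rfl | rfl | rfl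
  · exact absurd hg.1 hur
  iterate 2
    exact Or.inl ⟨hg.2.2.1.status_eq_idle, by simp [hsucc, execRule],
      by simpa [hsucc, execRule] using hg.2.2.1.ph_ne_parentPh.symm⟩
  · exact Or.inr ⟨hg.2.2.status_ne_idle, hg.2.2.quietSubTree, hg.2.2.1,
      by simp [hsucc, execRule], by simp [hsucc, execRule]⟩
  · exact absurd hρ (he.act_ne_R7 hu t)

theorem exists_quiet_phase_change (he : e.TreeRulesNoRecolor) (hu : ActsInfOften e u) (N : ℕ) :
    ∃ i k, N ≤ i ∧ i < k ∧ QuietSubTree G (e.conf i) u ∧ QuietSubTree G (e.conf k) u ∧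
      Child G (e.conf k) u ≠ ∅ ∧ (e.conf k u).ph ≠ (e.conf i u).ph := by
  obtain ⟨t, hNt, ht⟩ := hu N
  by_cases hur : u = r
  · subst hur
    obtain ⟨k, htk, hk, hck⟩ := hu.exists_next_act t
    obtain ⟨hqt, -, hpht⟩ := he.root_step ht
    obtain ⟨hqk, hchk, -⟩ := he.root_step hk
    exact ⟨t, k, hNt, htk, hqt, hqk, hchk, by simp [hck, hpht]⟩
  have closing : ∃ i, N ≤ i ∧ e.act i u ≠ none ∧ (e.conf i u).S ≠ Idle := by
    by_cases hSt : (e.conf t u).S = Idle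
    · obtain ⟨k, htk, hk, hck⟩ := hu.exists_next_act t
      refine ⟨k, by omega, hk, hck ▸ ?_⟩
      exact ((he.ne_root_step hu hur ht).resolve_right fun h => h.1 hSt).2.1
    · exact ⟨t, hNt, ht, hSt⟩
  obtain ⟨i, hNi, hi, hSi⟩ := closing
  -- the move after the closing move `i` opens a new phase (`j`), and the next one closes it (`k`)
  obtain ⟨-, hqi, -, hSi', hphi⟩ := (he.ne_root_step hu hur hi).resolve_left fun h => hSi h.1
  obtain ⟨j, hij, hj, hcj⟩ := hu.exists_next_act i
  obtain ⟨-, hSj', hphj⟩ :=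
    (he.ne_root_step hu hur hj).resolve_right fun h => h.1 (hcj ▸ hSi')
  obtain ⟨k, hjk, hk, hck⟩ := hu.exists_next_act j
  obtain ⟨-, hqk, hchk, -⟩ :=
    (he.ne_root_step hu hur hk).resolve_left fun h => hSj' (hck ▸ h.1)
  refine ⟨i, k, hNi, by omega, hqi, hqk, hchk, ?_⟩
  rwa [hck, ← hphi, ← hcj]

theorem exists_permanent_child [Finite V] (he : e.TreeRulesNoRecolor) (hu : ActsInfOften e u) :
    ∃ v, G.Adj u v ∧ (∀ i, (e.conf i v).P = some u) ∧ ActsInfOften e v := by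
  obtain ⟨T, hT⟩ := WellFoundedLT.antitone_chain_condition (he.child_antitone u)
  obtain ⟨i₀, k₀, hTi₀, hik₀, -, -, hk₀, -⟩ := he.exists_quiet_phase_change hu T
  obtain ⟨v, hv⟩ := Set.nonempty_iff_ne_empty.2 hk₀
  rw [← hT k₀ (by omega)] at hv
  have hvP : ∀ i, (e.conf i v).P = some u := fun i =>
    (le_total i T).elim (fun h => (he.child_antitone u h hv).2) fun h => (hT i h ▸ hv).2
  refine ⟨v, hv.1, hvP, fun M => ?_⟩
  obtain ⟨i, k, hMi, hik, hqi, hqk, -, hph⟩ := he.exists_quiet_phase_change hu M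
  have hphv : (e.conf k v).ph ≠ (e.conf i v).ph := by
    rwa [(hqk v ⟨hv.1, hvP k⟩).2, (hqi v ⟨hv.1, hvP i⟩).2]
  obtain ⟨t, hit, -, ht⟩ := e.exists_act_of_ph_ne hik.le hphv
  exact ⟨t, hMi.trans hit, ht⟩

end Execution.TreeRulesNoRecolor

theorem stmt12_general {V : Type} [Fintype V]
    (G : SimpleGraph V) (r : V)
    (e : Execution G r) (hreg : RegularExec G r e)
    (hnc : ∀ i u, (e.conf (i + 1) u).C = (e.conf i u).C) :
    (∀ u, ActsInfOften e u →
      ∃ v, G.Adj u v ∧ (∀ i, (e.conf i v).P = some u) ∧ ActsInfOften e v) ∧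
    (∃ l, 0 < l ∧ ∃ us : ℕ → V,
      (∀ j, us (j + l) = us j) ∧
      (∀ i j, (e.conf i (us (j + 1))).P = some (us j)) ∧
      (∀ j, ActsInfOften e (us j))) := by
  have he : e.TreeRulesNoRecolor := ⟨hreg.2, hnc⟩
  have hchild := fun u (hu : ActsInfOften e u) => he.exists_permanent_child hu
  refine ⟨hchild, ?_⟩
  obtain ⟨u₀, hu₀⟩ := exists_actsInfOften e
  have : Nonempty {u // ActsInfOften e u} := ⟨⟨u₀, hu₀⟩⟩
  obtain ⟨l, hl, us, hper, hpar⟩ :=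
    exists_periodic_chain (R := fun x y : {u // ActsInfOften e u} => ∀ i, (e.conf i y.1).P = some x.1)
      fun x => let ⟨v, _, hvP, hv⟩ := hchild x x.2; ⟨⟨v, hv⟩, hvP⟩
  exact ⟨l, hl, fun j => us j, fun j => congrArg Subtype.val (hper j), fun i j => hpar j i, fun j => (us j).2⟩

/-- in a regular execution without color changes, every process
executing infinitely often has forever a child executing infinitely often;
hence there is a cycle path all of whose processes execute infinitely often. -/
theorem stmt12 {V : Type} [Fintype V] [DecidableEq V]
    (G : SimpleGraph V) (r : V)
    (e : Execution G r) (hreg : RegularExec G r e)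
    (hnc : ∀ i u, (e.conf (i + 1) u).C = (e.conf i u).C) :
    (∀ u, ActsInfOften e u →
      ∃ v, G.Adj u v ∧ (∀ i, (e.conf i v).P = some u) ∧ ActsInfOften e v) ∧
    (∃ l, 0 < l ∧ ∃ us : ℕ → V,
      (∀ j, us (j + l) = us j) ∧
      (∀ i j, (e.conf i (us (j + 1))).P = some (us j)) ∧
      (∀ j, ActsInfOften e (us j))) :=
  stmt12_general G r e hreg hnc

end BFS
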